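/- Let (X,r) be a solution. For all x, y ∈ X and every positive integer l, one has π_l(y) = Id if and only if π_l(σ_x(y)) = Id. Consequently, the least positive integer l with π_l(y) = Id is the same for all elements y lying in the same 𝒢(X,r)-orbit. -/

import Mathlib

open Function

variable {X : Type*}

/-- The map `r(x,y) = (σ_x(y), τ_y(x))` built from two families of bijections. -/
def ybR (σ τ : X → Equiv.Perm X) : X × X → X × X :=
  fun p => (σ p.1 p.2, τ p.2 p.1)

/-- Apply a map `X × X → X × X` to the first two coordinates of a triple (`r × id`). -/
def lmap (r : X × X → X × X) : X × X × X → X × X × X :=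
  fun p => ((r (p.1, p.2.1)).1, ((r (p.1, p.2.1)).2, p.2.2))

/-- Apply a map `X × X → X × X` to the last two coordinates of a triple (`id × r`). -/
def rmap (r : X × X → X × X) : X × X × X → X × X × X :=
  fun p => (p.1, r p.2)

/-- A finite non-degenerate involutive set-theoretic solution of the Yang--Baxter
equation on a finite set `X` with `|X| > 1`. -/
structure YBSolution (X : Type*) [Fintype X] where
  σ : X → Equiv.Perm X
  τ : X → Equiv.Perm X
  card_gt_one : 1 < Fintype.card X
  involutive : ∀ p : X × X, ybR σ τ (ybR σ τ p) = p
  braid : lmap (ybR σ τ) ∘ rmap (ybR σ τ) ∘ lmap (ybR σ τ)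
        = rmap (ybR σ τ) ∘ lmap (ybR σ τ) ∘ rmap (ybR σ τ)

namespace YBSolution

variable [Fintype X]

/-- The diagonal map `T(x) = τ_x⁻¹(x)`. -/
def T (S : YBSolution X) (x : X) : X := (S.τ x).symm x

/-- The map `U(x) = σ_x⁻¹(x)`, the inverse of the diagonal map. -/
def U (S : YBSolution X) (x : X) : X := (S.σ x).symm x

/-- The `k`-cabled sigma maps (also denoted `π_k`):
`σ^{(k)}_x = σ_x ∘ σ_{U(x)} ∘ ⋯ ∘ σ_{U^{k-1}(x)}`. -/
def sigmaCab (S : YBSolution X) : ℕ → X → X → X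
  | 0, _ => id
  | k + 1, x => ⇑(S.σ x) ∘ S.sigmaCab k (S.U x)

/-- The composition `τ_{U^{k-1}(y)} ∘ ⋯ ∘ τ_{U(y)} ∘ τ_y`. -/
def tauChain (S : YBSolution X) : ℕ → X → X → X
  | 0, _ => id
  | k + 1, y => S.tauChain k (S.U y) ∘ ⇑(S.τ y)

/-- The `k`-cabled tau maps:
`τ^{(k)}_y = T^{k-1} ∘ τ_{U^{k-1}(y)} ∘ ⋯ ∘ τ_{U(y)} ∘ τ_y ∘ T^{-(k-1)}`,
where `T^{-(k-1)} = U^{k-1}` since `U` is the inverse of `T`. -/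
def tauCab (S : YBSolution X) (k : ℕ) (y : X) : X → X :=
  S.T^[k - 1] ∘ S.tauChain k y ∘ S.U^[k - 1]

/-- The `k`-cabled solution `r^{(k)}(x,y) = (σ^{(k)}_x(y), τ^{(k)}_y(x))`. -/
def rCab (S : YBSolution X) (k : ℕ) : X × X → X × X :=
  fun p => (S.sigmaCab k p.1 p.2, S.tauCab k p.2 p.1)

/-- The permutation group `𝒢(X,r)`, generated by the `σ_x`. -/
def G (S : YBSolution X) : Subgroup (Equiv.Perm X) :=
  Subgroup.closure (Set.range S.σ)

/-- The permutation group `𝒢(X,r^{(k)})` of the `k`-cabled solution,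
generated by the `σ^{(k)}_x`. -/
def Gcab (S : YBSolution X) (k : ℕ) : Subgroup (Equiv.Perm X) :=
  Subgroup.closure {g : Equiv.Perm X | ∃ x : X, ⇑g = S.sigmaCab k x}

/-- The orbit of `x` under the diagonal map `T`. -/
def Torbit (S : YBSolution X) (x : X) : Set X := {y | ∃ n : ℕ, S.T^[n] x = y}

/-- The orbit of `x` under `𝒢(X,r)`. -/
def Gorbit (S : YBSolution X) (x : X) : Set X := {y | ∃ g ∈ S.G, g x = y}

/-- The orbit of `x` under `𝒢(X,r^{(k)})`. -/
def GcabOrbit (S : YBSolution X) (k : ℕ) (x : X) : Set X :=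
  {y | ∃ g ∈ S.Gcab k, g x = y}

/-- A solution is indecomposable when `𝒢(X,r)` acts transitively on `X`. -/
def IsIndecomposable (S : YBSolution X) : Prop := ∀ x y : X, ∃ g ∈ S.G, g x = y

end YBSolution

/-!
Iterating the braid relation gives `σ_x ∘ π_l(y) = π_l(σ_x y) ∘ σ_c`, where
`c = τ_{U^{l-1}(y)} ⋯ τ_y (x)`, and involutivity gives `π_l(σ_x y)(c) = x`.
If `π_l(y) = id`, evaluating the first identity at `U(c)` yields `σ_x (U c) = x = σ_x (U x)`,
so `c = x` and then `π_l(σ_x y) = id`. Thus `{y | π_l(y) = id}` is mapped into itself by every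
`σ_x`; since `X` is finite, such a set is invariant under the whole group `𝒢(X,r)`.
-/

open Function

namespace Equiv.Perm

variable {α : Type*} [Finite α]

theorem mapsTo_of_mem_closure {s : Set (Perm α)} {A : Set α}
    (hs : ∀ g ∈ s, Set.MapsTo g A A) {g : Perm α} (hg : g ∈ Subgroup.closure s) :
    Set.MapsTo g A A := by
  rw [← Subgroup.mem_toSubmonoid, Subgroup.closure_toSubmonoid_of_finite] at hg
  induction hg using Submonoid.closure_induction with
  | mem g hg => exact hs g hg
  | one => exact Set.mapsTo_id A
  | mul g h _ _ hg hh => exact hg.comp hh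

theorem apply_mem_iff_of_mem_closure {s : Set (Perm α)} {A : Set α}
    (hs : ∀ g ∈ s, Set.MapsTo g A A) {g : Perm α} (hg : g ∈ Subgroup.closure s) (a : α) :
    g a ∈ A ↔ a ∈ A := by
  refine ⟨fun ha => ?_, fun ha => mapsTo_of_mem_closure hs hg ha⟩
  simpa using mapsTo_of_mem_closure hs (inv_mem hg) ha

end Equiv.Perm

namespace YBSolution

variable [Fintype X] (S : YBSolution X)

theorem sigma_sigma_tau (x y : X) : S.σ (S.σ x y) (S.τ y x) = x := by
  simpa [ybR] using congrArg Prod.fst (S.involutive (x, y))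

theorem sigma_sigma_sigma_tau (x y z : X) :
    S.σ (S.σ x y) (S.σ (S.τ y x) z) = S.σ x (S.σ y z) := by
  simpa [lmap, rmap, ybR] using congrArg Prod.fst (congrFun S.braid (x, y, z))

theorem sigma_U (x : X) : S.σ x (S.U x) = x := by
  simp [U]

theorem T_U (x : X) : S.T (S.U x) = x := by
  have h := S.sigma_sigma_tau x (S.U x)
  rw [S.sigma_U] at h
  rw [T, Equiv.symm_apply_eq]
  exact (S.σ x).injective (by rw [h, S.sigma_U])

theorem U_injective : Injective S.U :=
  LeftInverse.injective S.T_U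

theorem U_sigma (x y : X) : S.U (S.σ x y) = S.σ (S.τ y x) (S.U y) := by
  rw [U, Equiv.symm_apply_eq, S.sigma_sigma_sigma_tau, S.sigma_U]

theorem sigma_comp_sigmaCab (j : ℕ) (x y : X) :
    ⇑(S.σ x) ∘ S.sigmaCab j y = S.sigmaCab j (S.σ x y) ∘ ⇑(S.σ (S.tauChain j y x)) := by
  induction j generalizing x y with
  | zero => rfl
  | succ j ih =>
    have hbraid : ⇑(S.σ x) ∘ ⇑(S.σ y) = ⇑(S.σ (S.σ x y)) ∘ ⇑(S.σ (S.τ y x)) :=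
      funext fun z => (S.sigma_sigma_sigma_tau x y z).symm
    calc ⇑(S.σ x) ∘ S.sigmaCab (j + 1) y
        = (⇑(S.σ x) ∘ ⇑(S.σ y)) ∘ S.sigmaCab j (S.U y) := rfl
      _ = ⇑(S.σ (S.σ x y)) ∘ (⇑(S.σ (S.τ y x)) ∘ S.sigmaCab j (S.U y)) := by
        rw [hbraid]; rfl
      _ = ⇑(S.σ (S.σ x y)) ∘ (S.sigmaCab j (S.σ (S.τ y x) (S.U y))
            ∘ ⇑(S.σ (S.tauChain j (S.U y) (S.τ y x)))) := by
        rw [ih]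
      _ = S.sigmaCab (j + 1) (S.σ x y) ∘ ⇑(S.σ (S.tauChain (j + 1) y x)) := by
        rw [← S.U_sigma]; rfl

theorem sigmaCab_sigma_tauChain (j : ℕ) (x y : X) :
    S.sigmaCab j (S.σ x y) (S.tauChain j y x) = x := by
  induction j generalizing x y with
  | zero => rfl
  | succ j ih =>
    change S.σ (S.σ x y) (S.sigmaCab j (S.U (S.σ x y)) (S.tauChain j (S.U y) (S.τ y x))) = x
    rw [S.U_sigma, ih, S.sigma_sigma_tau]

theorem sigmaCab_sigma_eq_id {l : ℕ} {y : X} (hy : S.sigmaCab l y = id) (x : X) :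
    S.sigmaCab l (S.σ x y) = id := by
  set c := S.tauChain l y x
  have hfactor : ⇑(S.σ x) = S.sigmaCab l (S.σ x y) ∘ ⇑(S.σ c) := by
    simpa [hy] using S.sigma_comp_sigmaCab l x y
  have hc : c = x := by
    have hUc : S.σ x (S.U c) = x := by
      rw [congrFun hfactor, comp_apply, S.sigma_U, S.sigmaCab_sigma_tauChain]
    exact S.U_injective ((S.σ x).injective (hUc.trans (S.sigma_U x).symm))
  rw [hc] at hfactor
  exact (S.σ x).surjective.injective_comp_right hfactor.symm

theorem sigmaCab_apply_eq_id_iff {g : Equiv.Perm X} (hg : g ∈ S.G) (y : X) (l : ℕ) :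
    S.sigmaCab l (g y) = id ↔ S.sigmaCab l y = id := by
  refine Equiv.Perm.apply_mem_iff_of_mem_closure (A := {y | S.sigmaCab l y = id}) ?_ hg y
  rintro _ ⟨x, rfl⟩ y hy
  exact S.sigmaCab_sigma_eq_id hy x

theorem sigma_mem_G (x : X) : S.σ x ∈ S.G :=
  Subgroup.subset_closure ⟨x, rfl⟩

end YBSolution

/-- `π_l(y) = Id` iff `π_l(σ_x(y)) = Id`; consequently the least
positive `l` with `π_l(y) = Id` is constant on `𝒢(X,r)`-orbits. -/
theorem pi_constant_on_orbits [Fintype X] (S : YBSolution X) :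
    (∀ x y : X, ∀ l : ℕ, 0 < l →
      (S.sigmaCab l y = id ↔ S.sigmaCab l (S.σ x y) = id)) ∧
    ∀ y y' : X, (∃ g ∈ S.G, g y = y') → ∀ l : ℕ,
      (IsLeast {l' : ℕ | 0 < l' ∧ S.sigmaCab l' y = id} l ↔
       IsLeast {l' : ℕ | 0 < l' ∧ S.sigmaCab l' y' = id} l) := by
  refine ⟨fun x y l _ => (S.sigmaCab_apply_eq_id_iff (S.sigma_mem_G x) y l).symm, ?_⟩
  rintro y _ ⟨g, hg, rfl⟩ l
  simp only [S.sigmaCab_apply_eq_id_iff hg]
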